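/- Let Z ∈ H_2^- (F_0-measurable, E(Z|F_{-∞})=0, Σ_{k≥0}||P_{-k}Z||_2 < ∞) and define QZ = E(Z∘θ|F_0) and the operator D W := Σ_{n∈Z} P_1(W∘θ^n). Then D((I−Q)Z) = (P_0 Z)∘θ and the coboundary identity (I−Q)Z − D((I−Q)Z) = Z − Z∘θ holds. -/

import Mathlib

open MeasureTheory Filter Real

noncomputable def l2norm {Ω X : Type} (m : MeasurableSpace Ω) [NormedAddCommGroup X]
    (μ : @Measure Ω m) (f : Ω → X) : ℝ :=
  Real.sqrt (∫ ω, ‖f ω‖ ^ 2 ∂μ)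

/-- The martingale difference projection `P_n = E(·|F_n) − E(·|F_{n-1})`. -/
noncomputable def Pproj {Ω X : Type} (m : MeasurableSpace Ω) [NormedAddCommGroup X]
    [NormedSpace ℝ X] [CompleteSpace X] (μ : @Measure Ω m)
    (F : ℤ → MeasurableSpace Ω) (n : ℤ) (f : Ω → X) : Ω → X :=
  fun ω => (μ[f | F n]) ω - (μ[f | F (n - 1)]) ω

/-- The operator `Q W = E(W∘θ | F₀)`. -/
noncomputable def QOp {Ω X : Type} (m : MeasurableSpace Ω) [NormedAddCommGroup X]
    [NormedSpace ℝ X] [CompleteSpace X] (μ : @Measure Ω m) (θ : Ω → Ω)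
    (F0 : MeasurableSpace Ω) (W : Ω → X) : Ω → X :=
  μ[W ∘ θ | F0]

/-!
Write `θⁿ = ι n`. The filtration is stationary, `F (k + n) = θ⁻ⁿ F k`, so conditional
expectations commute with the shift: `E(V∘θⁿ | F k) = E(V | F (k - n))∘θⁿ`. Hence the `n`-th
term of `D((I-Q)Z)` is `(P_{1-n}Z)∘θⁿ − (P_{1-n}QZ)∘θⁿ`. It vanishes for `n ≤ 0`, since `Z` and
`QZ` are `F 0`-measurable, and for `n ≥ 1` it equals `(P_{1-n}Z)∘θⁿ − (P_{-n}Z)∘θⁿ⁺¹`, since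
`P_j QZ = (P_{j-1}Z)∘θ` for `j ≤ 0`. The symmetric partial sums thus telescope to
`(P₀Z)∘θ − (P_{-N}Z)∘θᴺ⁺¹`, and the error term has `L²` norm `‖P_{-N}Z‖₂ → 0` because `θᴺ⁺¹`
preserves `μ`. The coboundary identity is `QZ = (E_{-1}Z)∘θ` together with `P₀Z = Z − E_{-1}Z`.
-/

theorem Finset.sum_Icc_neg_eq_sub_of_telescoping {M : Type*} [AddCommGroup M] {a g : ℤ → M}
    (h_nonpos : ∀ n ≤ 0, a n = 0) (h_pos : ∀ n, 0 < n → a n = g n - g (n + 1)) (N : ℕ) :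
    ∑ n ∈ Finset.Icc (-(N : ℤ)) N, a n = g 1 - g (N + 1) := by
  induction N with
  | zero => simp [h_nonpos 0 le_rfl]
  | succ N ih =>
    rw [Nat.cast_succ, neg_add', ← Finset.insert_Icc_left_eq_Icc_sub_one (by omega),
      ← Finset.insert_Icc_right_eq_Icc_add_one (by omega), Finset.sum_insert (by simp; omega),
      Finset.sum_insert (by simp), ih, h_nonpos _ (by omega), h_pos _ (by omega)]
    abel

namespace MeasureTheory

theorem MeasurePreserving.condExp_comp {Ω X : Type*} [NormedAddCommGroup X] [NormedSpace ℝ X]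
    [CompleteSpace X] {𝒢 m : MeasurableSpace Ω} {μ : Measure Ω} [IsFiniteMeasure μ] {T : Ω → Ω}
    (hT : MeasurePreserving T μ μ) (h𝒢 : 𝒢 ≤ m) {f : Ω → X} (hf : Integrable f μ) :
    μ[f ∘ T | 𝒢.comap T] =ᵐ[μ] μ[f | 𝒢] ∘ T := by
  have setIntegral_preimage : ∀ {g : Ω → X}, AEStronglyMeasurable g μ → ∀ {t : Set Ω},
      MeasurableSet[𝒢] t → ∫ x in T ⁻¹' t, g (T x) ∂μ = ∫ y in t, g y ∂μ := fun hg t ht => by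
    rw [← setIntegral_map (h𝒢 t ht) (by rwa [hT.map_eq]) hT.measurable.aemeasurable, hT.map_eq]
  refine (ae_eq_condExp_of_forall_setIntegral_eq
    ((MeasurableSpace.comap_mono h𝒢).trans hT.measurable.comap_le)
    (hT.integrable_comp_of_integrable hf)
    (fun s _ _ => (hT.integrable_comp_of_integrable integrable_condExp).integrableOn) ?_
    (stronglyMeasurable_condExp.comp_measurable
      (Measurable.of_comap_le le_rfl)).aestronglyMeasurable).symm
  rintro _ ⟨t, ht, rfl⟩ -
  rw [Function.comp_def, Function.comp_def,
    setIntegral_preimage (stronglyMeasurable_condExp.mono h𝒢).aestronglyMeasurable ht,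
    setIntegral_preimage hf.aestronglyMeasurable ht, setIntegral_condExp h𝒢 hf ht]

end MeasureTheory

section Shift

variable {Ω X : Type} [NormedAddCommGroup X] [NormedSpace ℝ X] [CompleteSpace X]
  {m : MeasurableSpace Ω} {μ : Measure Ω} {F : ℤ → MeasurableSpace Ω} {ι : ℤ → Ω → Ω}

theorem filtration_add_eq_comap (hι0 : ι 0 = id) (hιadd : ∀ a b, ι (a + b) = ι a ∘ ι b)
    (hF : ∀ n, F (n + 1) = (F n).comap (ι 1)) (n k : ℤ) : F (k + n) = (F k).comap (ι n) := by
  have comap_comap_neg_one : ∀ 𝒢 : MeasurableSpace Ω, (𝒢.comap (ι 1)).comap (ι (-1)) = 𝒢 :=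
    fun 𝒢 => by
      rw [MeasurableSpace.comap_comp, ← hιadd, add_neg_cancel, hι0, MeasurableSpace.comap_id]
  induction n using Int.induction_on with
  | zero => rw [add_zero, hι0, MeasurableSpace.comap_id]
  | succ n ih => rw [← add_assoc, hF, ih, MeasurableSpace.comap_comp, ← hιadd]
  | pred n ih =>
    calc F (k + (-n - 1)) = ((F (k + (-n - 1))).comap (ι 1)).comap (ι (-1)) :=
          (comap_comap_neg_one _).symm
      _ = (F (k + -n)).comap (ι (-1)) := by rw [← hF, add_sub_assoc', sub_add_cancel]
      _ = (F k).comap (ι (-n - 1)) := by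
          rw [ih, MeasurableSpace.comap_comp, ← hιadd, sub_eq_add_neg]

theorem Pproj_sub {f g : Ω → X} (hf : Integrable f μ) (hg : Integrable g μ) (k : ℤ) :
    Pproj m μ F k (f - g) =ᵐ[μ] Pproj m μ F k f - Pproj m μ F k g := by
  filter_upwards [condExp_sub hf hg (F k), condExp_sub hf hg (F (k - 1))] with ω h₀ h₁
  simp only [Pproj, Pi.sub_apply, h₀, h₁]
  abel

variable [IsFiniteMeasure μ]

theorem Pproj_eq_zero_of_stronglyMeasurable (hmono : Monotone F) (hle : ∀ n, F n ≤ m)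
    {j k : ℤ} (hjk : j < k) {f : Ω → X} (hf : StronglyMeasurable[F j] f)
    (hfi : Integrable f μ) : Pproj m μ F k f = 0 := by
  have hfix : ∀ i, j ≤ i → μ[f | F i] = f := fun i hi =>
    condExp_of_stronglyMeasurable (hle i) (hf.mono (hmono hi)) hfi
  funext ω
  simp only [Pproj, hfix k hjk.le, hfix (k - 1) (by omega), sub_self, Pi.zero_apply]

theorem condExp_comp_shift (hle : ∀ n, F n ≤ m) (hιmp : ∀ n, MeasurePreserving (ι n) μ μ)
    (hF : ∀ n k, F (k + n) = (F k).comap (ι n)) {V : Ω → X} (hV : Integrable V μ) (n k : ℤ) :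
    μ[V ∘ ι n | F k] =ᵐ[μ] μ[V | F (k - n)] ∘ ι n := by
  have hFk := hF n (k - n)
  rw [sub_add_cancel] at hFk
  rw [hFk]
  exact (hιmp n).condExp_comp (hle _) hV

theorem Pproj_comp_shift (hle : ∀ n, F n ≤ m) (hιmp : ∀ n, MeasurePreserving (ι n) μ μ)
    (hF : ∀ n k, F (k + n) = (F k).comap (ι n)) {V : Ω → X} (hV : Integrable V μ) (n k : ℤ) :
    Pproj m μ F k (V ∘ ι n) =ᵐ[μ] Pproj m μ F (k - n) V ∘ ι n := by
  have h₁ := condExp_comp_shift hle hιmp hF hV n (k - 1)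
  rw [sub_right_comm] at h₁
  filter_upwards [condExp_comp_shift hle hιmp hF hV n k, h₁] with ω h₀ h₁
  simp only [Pproj, Function.comp_apply, h₀, h₁]

theorem Pproj_QOp_ae_eq_comp (hmono : Monotone F) (hle : ∀ n, F n ≤ m)
    (hιmp : ∀ n, MeasurePreserving (ι n) μ μ) (hF : ∀ n k, F (k + n) = (F k).comap (ι n))
    {V : Ω → X} (hV : Integrable V μ) {j : ℤ} (hj : j ≤ 0) :
    Pproj m μ F j (QOp m μ (ι 1) (F 0) V) =ᵐ[μ] Pproj m μ F (j - 1) V ∘ ι 1 := by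
  have hE : ∀ i ≤ 0, μ[QOp m μ (ι 1) (F 0) V | F i] =ᵐ[μ] μ[V | F (i - 1)] ∘ ι 1 :=
    fun i hi => (condExp_condExp_of_le (hmono hi) (hle 0)).trans
      (condExp_comp_shift hle hιmp hF hV 1 i)
  filter_upwards [hE j hj, hE (j - 1) (by omega)] with ω h₀ h₁
  simp only [Pproj, Function.comp_apply, h₀, h₁]

end Shift

section Coboundary

variable {Ω X : Type} [NormedAddCommGroup X] [NormedSpace ℝ X] [CompleteSpace X]
  {m : MeasurableSpace Ω} {μ : Measure Ω} [IsFiniteMeasure μ] {F : ℤ → MeasurableSpace Ω}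
  {ι : ℤ → Ω → Ω} {Z : Ω → X}

theorem Pproj_one_sub_QOp_comp (hle : ∀ n, F n ≤ m)
    (hιmp : ∀ n, MeasurePreserving (ι n) μ μ) (hF : ∀ n k, F (k + n) = (F k).comap (ι n))
    (hZ : Integrable Z μ) (n : ℤ) :
    Pproj m μ F 1 ((Z - QOp m μ (ι 1) (F 0) Z) ∘ ι n) =ᵐ[μ]
      Pproj m μ F (1 - n) Z ∘ ι n - Pproj m μ F (1 - n) (QOp m μ (ι 1) (F 0) Z) ∘ ι n := by
  have hQ : Integrable (QOp m μ (ι 1) (F 0) Z) μ := integrable_condExp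
  filter_upwards [Pproj_comp_shift hle hιmp hF (hZ.sub hQ) n 1,
    (hιmp n).quasiMeasurePreserving.ae_eq_comp (Pproj_sub (F := F) hZ hQ (1 - n))] with ω h₀ h₁
  exact h₀.trans h₁

theorem Pproj_one_sub_QOp_comp_of_nonpos (hmono : Monotone F) (hle : ∀ n, F n ≤ m)
    (hιmp : ∀ n, MeasurePreserving (ι n) μ μ) (hF : ∀ n k, F (k + n) = (F k).comap (ι n))
    (hZ : Integrable Z μ) (hZm : StronglyMeasurable[F 0] Z) {n : ℤ} (hn : n ≤ 0) :
    Pproj m μ F 1 ((Z - QOp m μ (ι 1) (F 0) Z) ∘ ι n) =ᵐ[μ] 0 := by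
  have hlt : (0 : ℤ) < 1 - n := by omega
  filter_upwards [Pproj_one_sub_QOp_comp hle hιmp hF hZ n] with ω h
  rw [h, Pproj_eq_zero_of_stronglyMeasurable hmono hle hlt hZm hZ,
    Pproj_eq_zero_of_stronglyMeasurable (f := QOp m μ (ι 1) (F 0) Z) hmono hle hlt
      stronglyMeasurable_condExp integrable_condExp]
  simp

theorem Pproj_one_sub_QOp_comp_of_pos (hmono : Monotone F) (hle : ∀ n, F n ≤ m)
    (hιadd : ∀ a b, ι (a + b) = ι a ∘ ι b) (hιmp : ∀ n, MeasurePreserving (ι n) μ μ)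
    (hF : ∀ n k, F (k + n) = (F k).comap (ι n)) (hZ : Integrable Z μ) {n : ℤ} (hn : 0 < n) :
    Pproj m μ F 1 ((Z - QOp m μ (ι 1) (F 0) Z) ∘ ι n) =ᵐ[μ]
      Pproj m μ F (1 - n) Z ∘ ι n - Pproj m μ F (1 - (n + 1)) Z ∘ ι (n + 1) := by
  filter_upwards [Pproj_one_sub_QOp_comp hle hιmp hF hZ n,
    (hιmp n).quasiMeasurePreserving.ae_eq_comp
      (Pproj_QOp_ae_eq_comp hmono hle hιmp hF hZ (j := 1 - n) (by omega))] with ω h₀ h₁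
  rw [h₀, Pi.sub_apply, h₁, sub_sub, add_comm n 1, hιadd]
  rfl

theorem sum_Pproj_one_sub_QOp_comp_ae_eq (hmono : Monotone F) (hle : ∀ n, F n ≤ m)
    (hιadd : ∀ a b, ι (a + b) = ι a ∘ ι b) (hιmp : ∀ n, MeasurePreserving (ι n) μ μ)
    (hF : ∀ n k, F (k + n) = (F k).comap (ι n)) (hZ : Integrable Z μ)
    (hZm : StronglyMeasurable[F 0] Z) (N : ℕ) :
    (fun ω => ∑ n ∈ Finset.Icc (-(N : ℤ)) N,
        Pproj m μ F 1 ((Z - QOp m μ (ι 1) (F 0) Z) ∘ ι n) ω) =ᵐ[μ]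
      Pproj m μ F 0 Z ∘ ι 1 - Pproj m μ F (-N) Z ∘ ι (N + 1) := by
  filter_upwards [ae_all_iff.2 fun n : {n : ℤ // n ≤ 0} =>
      Pproj_one_sub_QOp_comp_of_nonpos hmono hle hιmp hF hZ hZm n.2,
    ae_all_iff.2 fun n : {n : ℤ // 0 < n} =>
      Pproj_one_sub_QOp_comp_of_pos hmono hle hιadd hιmp hF hZ n.2] with ω h₀ h₁
  rw [Finset.sum_Icc_neg_eq_sub_of_telescoping (g := fun n => Pproj m μ F (1 - n) Z (ι n ω))
    (fun n hn => h₀ ⟨n, hn⟩) (fun n hn => h₁ ⟨n, hn⟩)]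
  simp only [Pi.sub_apply, Function.comp_apply, sub_self, sub_add_cancel_right]

end Coboundary

theorem eLpNorm_two_eq_ofReal_l2norm {Ω X : Type} [NormedAddCommGroup X] {m : MeasurableSpace Ω}
    {μ : Measure Ω} {f : Ω → X} (hf : MemLp f 2 μ) :
    eLpNorm f 2 μ = ENNReal.ofReal (l2norm m μ f) := by
  rw [← ofReal_lpNorm hf, l2norm,
    lpNorm_eq_integral_norm_rpow_toReal two_ne_zero ENNReal.ofNat_ne_top hf.1, sqrt_eq_rpow]
  norm_num

theorem stmt12_general
    (X : Type) [NormedAddCommGroup X] [NormedSpace ℝ X] [CompleteSpace X]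
    (Ω : Type) [m : MeasurableSpace Ω] (μ : Measure Ω) [IsProbabilityMeasure μ]
    (θ : Ω → Ω)
    (ι : ℤ → Ω → Ω) (hι1 : ι 1 = θ) (hι0 : ι 0 = id)
    (hιadd : ∀ a b : ℤ, ι (a + b) = ι a ∘ ι b)
    (hιmp : ∀ n : ℤ, MeasurePreserving (ι n) μ μ)
    (F : ℤ → MeasurableSpace Ω) (hmono : Monotone F) (hle : ∀ n, F n ≤ m)
    (hFθ : ∀ n : ℤ, F (n + 1) = MeasurableSpace.comap θ (F n))
    (Z : Ω → X) (hZ : MemLp Z 2 μ) (hZmeas : StronglyMeasurable[F 0] Z)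
    (hZH : Summable (fun k : ℕ => l2norm m μ (Pproj m μ F (-(k : ℤ)) Z))) :
    Tendsto (fun N : ℕ =>
        eLpNorm (fun ω =>
          (∑ n ∈ Finset.Icc (-(N : ℤ)) (N : ℤ),
            ((μ[(fun ω' => Z ω' - QOp m μ θ (F 0) Z ω') ∘ ι n | F 1]) ω -
             (μ[(fun ω' => Z ω' - QOp m μ θ (F 0) Z ω') ∘ ι n | F 0]) ω)) -
          Pproj m μ F 0 Z (θ ω)) 2 μ)
      atTop (nhds 0) ∧
    (fun ω => (Z ω - QOp m μ θ (F 0) Z ω) - Pproj m μ F 0 Z (θ ω)) =ᵐ[μ]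
      (fun ω => Z ω - Z (θ ω)) := by
  subst hι1
  have hF := filtration_add_eq_comap hι0 hιadd hFθ
  have hZi := hZ.integrable one_le_two
  constructor
  · rw [← ENNReal.ofReal_zero]
    refine (ENNReal.tendsto_ofReal hZH.tendsto_atTop_zero).congr fun N => ?_
    have hP : MemLp (Pproj m μ F (-N) Z) 2 μ := (hZ.condExp one_le_two).sub (hZ.condExp one_le_two)
    -- the summands in the statement are `Pproj m μ F 1 (…)` unfolded
    refine Eq.trans ?_ (eLpNorm_congr_ae ((sum_Pproj_one_sub_QOp_comp_ae_eq hmono hle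
      hιadd hιmp hF hZi hZmeas N).mono fun ω h => congrArg (· - Pproj m μ F 0 Z (ι 1 ω)) h)).symm
    rw [← eLpNorm_two_eq_ofReal_l2norm hP, ← eLpNorm_comp_measurePreserving hP.1 (hιmp (N + 1)),
      ← eLpNorm_neg]
    congr 1
    ext ω
    simp
  · filter_upwards [condExp_comp_shift hle hιmp hF hZi 1 0] with ω h
    rw [QOp, h, Pproj, condExp_of_stronglyMeasurable (hle 0) hZmeas hZi]
    simp

/-- for `Z ∈ H₂⁻`, the operator `D W = ∑_{n∈ℤ} P₁(W∘θⁿ)` applied to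
`(I−Q)Z` equals `(P₀Z)∘θ` (the series converging in `L²`), and the Gordin–Lifšic
coboundary identity `(I−Q)Z − D((I−Q)Z) = Z − Z∘θ` holds. -/
theorem stmt12
    (X : Type) [NormedAddCommGroup X] [NormedSpace ℝ X] [CompleteSpace X]
    [TopologicalSpace.SeparableSpace X]
    (Ω : Type) [m : MeasurableSpace Ω] (μ : Measure Ω) [IsProbabilityMeasure μ]
    (θ : Ω → Ω) (hθ : MeasurePreserving θ μ μ)
    (ι : ℤ → Ω → Ω) (hι1 : ι 1 = θ) (hι0 : ι 0 = id)
    (hιadd : ∀ a b : ℤ, ι (a + b) = ι a ∘ ι b)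
    (hιmp : ∀ n : ℤ, MeasurePreserving (ι n) μ μ)
    (F : ℤ → MeasurableSpace Ω) (hmono : Monotone F) (hle : ∀ n, F n ≤ m)
    (hFθ : ∀ n : ℤ, F (n + 1) = MeasurableSpace.comap θ (F n))
    (Z : Ω → X) (hZ : MemLp Z 2 μ) (hZmeas : StronglyMeasurable[F 0] Z)
    (hZreg : μ[Z | ⨅ n : ℤ, F n] =ᵐ[μ] 0)
    (hZH : Summable (fun k : ℕ => l2norm m μ (Pproj m μ F (-(k : ℤ)) Z))) :
    Tendsto (fun N : ℕ =>
        eLpNorm (fun ω =>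
          (∑ n ∈ Finset.Icc (-(N : ℤ)) (N : ℤ),
            ((μ[(fun ω' => Z ω' - QOp m μ θ (F 0) Z ω') ∘ ι n | F 1]) ω -
             (μ[(fun ω' => Z ω' - QOp m μ θ (F 0) Z ω') ∘ ι n | F 0]) ω)) -
          Pproj m μ F 0 Z (θ ω)) 2 μ)
      atTop (nhds 0) ∧
    (fun ω => (Z ω - QOp m μ θ (F 0) Z ω) - Pproj m μ F 0 Z (θ ω)) =ᵐ[μ]
      (fun ω => Z ω - Z (θ ω)) :=
  stmt12_general X Ω (m := m) μ θ ι hι1 hι0 hιadd hιmp F hmono hle hFθ Z hZ hZmeas hZH
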